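/- arXiv:2012.07770 — 9 statements merged into one kernel-verified Lean document; each statement's English description precedes it below -/
import Mathlib

section
/- Let n ≥ 1 and let A be an n×n real matrix all of whose entries are strictly positive. Then there exists a real number λ₁ > 0 such that λ₁ is an eigenvalue of A (i.e. there is a nonzero vector v with A·v = λ₁·v) and λ₁ is a simple root of the characteristic polynomial of A. -/
/-!
The Perron root `r` is the largest `μ ≥ 0` with `μ • v ≤ A *ᵥ v` for some `v` in the standard
simplex; it exists by compactness, and a maximiser is an eigenvector, since otherwise applying the
positive matrix `A` once more gives a strictly larger `μ`. A positive eigenvector `u` spans the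
`r`-eigenspace: subtracting from an eigenvector `x` the largest multiple of `u` below it leaves a
nonnegative eigenvector with a zero entry, which must vanish. The same construction for `Aᵀ` gives
a positive left eigenvector `w`, for the same `r` because `w ⬝ᵥ u > 0`. As `w` kills the range of
`A - r` but not `u`, there are no Jordan chains, so the algebraic multiplicity of `r` equals its
geometric multiplicity `1`.
-/

open Matrix Filter Topology

namespace Module.End

variable {R M : Type*} [CommRing R] [AddCommGroup M] [Module R M]

theorem maxGenEigenspace_eq_eigenspace_of_dual {f : End R M} {μ : R} (ℓ : Dual R M)
    (hℓ : ∀ x, ℓ (f x) = μ * ℓ x) (hinj : ∀ x ∈ f.eigenspace μ, ℓ x = 0 → x = 0) :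
    f.maxGenEigenspace μ = f.eigenspace μ := by
  refine le_antisymm (fun x hx => ?_) eigenspace_le_maxGenEigenspace
  obtain ⟨k, hk⟩ := (mem_maxGenEigenspace f μ x).1 hx
  clear hx
  induction k generalizing x with
  | zero => simp_all
  | succ k ih =>
    have hy : (f - μ • 1) x ∈ f.eigenspace μ := ih _ (by rwa [← mul_apply, ← pow_succ])
    rw [mem_eigenspace_iff, ← sub_eq_zero]
    exact hinj _ hy (by simp [hℓ])

end Module.End

theorem exists_pos_smul_le {ι : Type*} [Finite ι] {x : ι → ℝ} (hx : ∀ i, 0 < x i) (y : ι → ℝ) :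
    ∃ ε : ℝ, 0 < ε ∧ ε • y ≤ x := by
  have h : ∀ᶠ ε in 𝓝 (0 : ℝ), ∀ i, ε * y i < x i :=
    eventually_all.2 fun i => (continuous_id.mul continuous_const).tendsto' 0 0 (zero_mul _)
      |>.eventually (gt_mem_nhds (hx i))
  have h' : ∀ᶠ ε in 𝓝[>] (0 : ℝ), ∀ i, ε * y i < x i := nhdsWithin_le_nhds h
  obtain ⟨ε, hε, hεpos⟩ := (h'.and self_mem_nhdsWithin).exists
  exact ⟨ε, hεpos, fun i => (hε i).le⟩

namespace Matrix

variable {ι : Type*} [Fintype ι] {A : Matrix ι ι ℝ}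

theorem mulVec_pos_of_nonneg_of_ne_zero (hA : ∀ i j, 0 < A i j) {v : ι → ℝ} (hv : 0 ≤ v)
    (hv0 : v ≠ 0) (i : ι) : 0 < (A *ᵥ v) i := by
  obtain ⟨j, hj⟩ := Function.ne_iff.1 hv0
  exact Finset.sum_pos' (fun j _ => mul_nonneg (hA i j).le (hv j))
    ⟨j, Finset.mem_univ j, mul_pos (hA i j) ((hv j).lt_of_ne' hj)⟩

/-- The Perron root is the largest first coordinate in this set (Collatz–Wielandt). -/
def collatzWielandtSet (A : Matrix ι ι ℝ) : Set (ℝ × (ι → ℝ)) :=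
  {p | 0 ≤ p.1 ∧ p.2 ∈ stdSimplex ℝ ι ∧ p.1 • p.2 ≤ A *ᵥ p.2}

theorem le_sum_sum_of_smul_le_mulVec (hA : ∀ i j, 0 ≤ A i j) {μ : ℝ} {v : ι → ℝ}
    (hv : v ∈ stdSimplex ℝ ι) (h : μ • v ≤ A *ᵥ v) : μ ≤ ∑ i, ∑ j, A i j := calc
  μ = ∑ i, μ * v i := by rw [← Finset.mul_sum, hv.2, mul_one]
  _ ≤ ∑ i, ∑ j, A i j * v j := Finset.sum_le_sum fun i _ => h i
  _ ≤ ∑ i, ∑ j, A i j := Finset.sum_le_sum fun i _ => Finset.sum_le_sum fun j _ =>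
    mul_le_of_le_one_right (hA i j) (mem_Icc_of_mem_stdSimplex hv j).2

theorem isCompact_collatzWielandtSet (hA : ∀ i j, 0 ≤ A i j) :
    IsCompact (collatzWielandtSet A) := by
  refine (isCompact_Icc.prod (isCompact_stdSimplex ℝ ι)).of_isClosed_subset ?_
    fun p hp => ⟨⟨hp.1, le_sum_sum_of_smul_le_mulVec hA hp.2.1 hp.2.2⟩, hp.2.1⟩
  exact (isClosed_le continuous_const continuous_fst).inter <|
    ((isClosed_stdSimplex ℝ ι).preimage continuous_snd).inter <|
      isClosed_le (continuous_fst.smul continuous_snd)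
        (continuous_const.matrix_mulVec continuous_snd)

theorem mk_mem_collatzWielandtSet {μ : ℝ} {v : ι → ℝ} (hμ : 0 ≤ μ) (hv : 0 ≤ v) (hv0 : v ≠ 0)
    (h : μ • v ≤ A *ᵥ v) : (μ, (∑ i, v i)⁻¹ • v) ∈ collatzWielandtSet A := by
  obtain ⟨j, hj⟩ := Function.ne_iff.1 hv0
  have hsum : 0 < ∑ i, v i :=
    Finset.sum_pos' (fun i _ => hv i) ⟨j, Finset.mem_univ j, (hv j).lt_of_ne' hj⟩
  refine ⟨hμ, ⟨fun i => mul_nonneg (inv_nonneg.2 hsum.le) (hv i), ?_⟩, ?_⟩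
  · simp [← Finset.mul_sum, hsum.ne']
  · rw [smul_comm, mulVec_smul]
    exact smul_le_smul_of_nonneg_left h (inv_nonneg.2 hsum.le)

theorem exists_gt_smul_le_mulVec (hA : ∀ i j, 0 < A i j) {μ : ℝ} {v : ι → ℝ} (hv : 0 ≤ v)
    (hv0 : v ≠ 0) (h : μ • v ≤ A *ᵥ v) (hne : A *ᵥ v ≠ μ • v) :
    ∃ μ' > μ, ∃ y, 0 ≤ y ∧ y ≠ 0 ∧ μ' • y ≤ A *ᵥ y := by
  set d := A *ᵥ v - μ • v
  have hAv : ∀ i, 0 < (A *ᵥ v) i := mulVec_pos_of_nonneg_of_ne_zero hA hv hv0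
  have hAd : ∀ i, 0 < (A *ᵥ d) i :=
    mulVec_pos_of_nonneg_of_ne_zero hA (sub_nonneg.2 h) (sub_ne_zero.2 hne)
  obtain ⟨ε, hε, hεd⟩ := exists_pos_smul_le hAd (A *ᵥ v)
  refine ⟨μ + ε, lt_add_of_pos_right μ hε, A *ᵥ v, fun i => (hAv i).le, ?_, ?_⟩
  · obtain ⟨j, -⟩ := Function.ne_iff.1 hv0
    exact Function.ne_iff.2 ⟨j, (hAv j).ne'⟩
  · have hAAv : A *ᵥ (A *ᵥ v) = μ • A *ᵥ v + A *ᵥ d := by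
      rw [← mulVec_smul, ← mulVec_add, add_sub_cancel]
    rw [hAAv, add_smul]
    exact add_le_add_right hεd _

theorem exists_pos_eigenvector [Nonempty ι] (hA : ∀ i j, 0 < A i j) :
    ∃ r : ℝ, 0 < r ∧ ∃ u : ι → ℝ, (∀ i, 0 < u i) ∧ A *ᵥ u = r • u := by
  obtain ⟨i₀⟩ := ‹Nonempty ι›
  have hne : (collatzWielandtSet A).Nonempty := by
    classical
    refine ⟨(0, Pi.single i₀ 1), le_rfl, single_mem_stdSimplex ℝ i₀, ?_⟩
    rw [zero_smul]
    exact fun i => (mulVec_pos_of_nonneg_of_ne_zero hA (Pi.single_nonneg.2 zero_le_one)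
      (by simp) i).le
  obtain ⟨⟨r, u⟩, ⟨hr, hu, hru⟩, hmax⟩ :=
    (isCompact_collatzWielandtSet fun i j => (hA i j).le).exists_isMaxOn hne
      continuous_fst.continuousOn
  have hu0 : u ≠ 0 := fun h => by simpa [h] using hu.2
  have hAu : A *ᵥ u = r • u := by
    by_contra hne
    obtain ⟨r', hr', y, hy, hy0, hry⟩ := exists_gt_smul_le_mulVec hA hu.1 hu0 hru hne
    exact (hmax (mk_mem_collatzWielandtSet (hr.trans hr'.le) hy hy0 hry)).not_gt hr'
  have hpos (i : ι) : 0 < r * u i := by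
    simpa [hAu] using mulVec_pos_of_nonneg_of_ne_zero hA hu.1 hu0 i
  exact ⟨r, pos_of_mul_pos_left (hpos i₀) (hu.1 i₀), u,
    fun i => pos_of_mul_pos_right (hpos i) hr, hAu⟩

theorem eigenspace_toLin'_eq_span_singleton [DecidableEq ι] [Nonempty ι]
    (hA : ∀ i j, 0 < A i j) {r : ℝ} {u : ι → ℝ} (hu : ∀ i, 0 < u i) (hAu : A *ᵥ u = r • u) :
    Module.End.eigenspace (toLin' A) r = ℝ ∙ u := by
  ext x
  rw [Module.End.mem_eigenspace_iff, toLin'_apply, Submodule.mem_span_singleton]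
  refine ⟨fun hAx => ?_, ?_⟩
  · obtain ⟨i₀, -, hi₀⟩ := Finset.exists_min_image Finset.univ (fun i => x i / u i)
      Finset.univ_nonempty
    set z := x - (x i₀ / u i₀) • u
    have hz : 0 ≤ z := fun i => by
      simpa [z, ← le_div_iff₀ (hu i)] using hi₀ i (Finset.mem_univ i)
    have hzi₀ : z i₀ = 0 := by simp [z, div_mul_cancel₀ _ (hu i₀).ne']
    have hAz : A *ᵥ z = r • z := by
      simp only [z, mulVec_sub, mulVec_smul, hAx, hAu, smul_sub, smul_comm r]
    by_contra hx
    have hz0 : z ≠ 0 := fun h => hx ⟨x i₀ / u i₀, (sub_eq_zero.1 h).symm⟩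
    simpa [hAz, hzi₀] using mulVec_pos_of_nonneg_of_ne_zero hA hz hz0 i₀
  · rintro ⟨c, rfl⟩
    rw [mulVec_smul, hAu, smul_comm]

theorem eq_of_mulVec_eq_smul_of_vecMul_eq_smul {r s : ℝ} {u w : ι → ℝ} (hAu : A *ᵥ u = r • u)
    (hwA : w ᵥ* A = s • w) (hwu : w ⬝ᵥ u ≠ 0) : r = s := by
  have h := dotProduct_mulVec w A u
  rw [hAu, hwA, dotProduct_smul, smul_dotProduct, smul_eq_mul, smul_eq_mul] at h
  exact mul_right_cancel₀ hwu h

theorem maxGenEigenspace_toLin'_eq_span_singleton [DecidableEq ι] [Nonempty ι]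
    (hA : ∀ i j, 0 < A i j) {r : ℝ} {u w : ι → ℝ} (hu : ∀ i, 0 < u i) (hAu : A *ᵥ u = r • u)
    (hwA : w ᵥ* A = r • w) (hwu : w ⬝ᵥ u ≠ 0) :
    Module.End.maxGenEigenspace (toLin' A) r = ℝ ∙ u := by
  rw [← eigenspace_toLin'_eq_span_singleton hA hu hAu]
  refine Module.End.maxGenEigenspace_eq_eigenspace_of_dual (dotProductEquiv ℝ ι w)
    (fun x => by simp [dotProduct_mulVec, hwA]) fun x hx hwx => ?_
  rw [eigenspace_toLin'_eq_span_singleton hA hu hAu, Submodule.mem_span_singleton] at hx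
  obtain ⟨c, rfl⟩ := hx
  rw [dotProductEquiv_apply_apply, dotProduct_smul, smul_eq_mul, mul_eq_zero] at hwx
  rw [hwx.resolve_right hwu, zero_smul]

end Matrix

/-- Perron–Frobenius: a strictly positive real `n × n` matrix (with `n ≥ 1`) has a
positive eigenvalue `λ₁` (admitting a nonzero eigenvector) which is a simple root of
its characteristic polynomial. -/
theorem positive_matrix_has_simple_positive_eigenvalue
    (n : ℕ) (hn : 1 ≤ n) (A : Matrix (Fin n) (Fin n) ℝ)
    (hA : ∀ i j, 0 < A i j) :
    ∃ lam : ℝ, 0 < lam ∧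
      (∃ v : Fin n → ℝ, v ≠ 0 ∧ A.mulVec v = lam • v) ∧
      (Matrix.charpoly A).rootMultiplicity lam = 1 := by
  have : Nonempty (Fin n) := ⟨⟨0, hn⟩⟩
  obtain ⟨r, hr, u, hu, hAu⟩ := exists_pos_eigenvector hA
  obtain ⟨s, -, w, hw, hAw⟩ := exists_pos_eigenvector (A := Aᵀ) fun i j => hA j i
  rw [mulVec_transpose] at hAw
  have hwu : w ⬝ᵥ u ≠ 0 :=
    (Finset.sum_pos (fun i _ => mul_pos (hw i) (hu i)) Finset.univ_nonempty).ne'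
  obtain rfl : r = s := eq_of_mulVec_eq_smul_of_vecMul_eq_smul hAu hAw hwu
  have hu0 : u ≠ 0 := fun h => (hu ⟨0, hn⟩).ne' (by simp [h])
  refine ⟨r, hr, ⟨u, hu0, hAu⟩, ?_⟩
  rw [← charpoly_toLin', ← LinearMap.finrank_maxGenEigenspace_eq,
    maxGenEigenspace_toLin'_eq_span_singleton hA hu hAu hAw hwu, finrank_span_singleton hu0]
end

section
/- Let n ≥ 1 and let A be an n×n real matrix all of whose entries are strictly positive. Then there exists a real number λ₁ > 0 and a vector v with all entries strictly positive such that A·v = λ₁·v, and every complex eigenvalue μ of A (i.e. every root of the characteristic polynomial of A viewed as a complex matrix) with μ ≠ λ₁ satisfies |μ| < λ₁. -/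
/-!
Let `ρ` be the spectral radius of `A` over `ℂ` and `μ₀` an eigenvalue with `‖μ₀‖ = ρ`, with
eigenvector `x`. The triangle inequality gives `ρ |x| ≤ A |x|` entrywise. If this were strict
somewhere, then by positivity of `A` the vector `z = A |x|` would satisfy `s z ≤ A z` for some
`s > ρ`, hence `s ^ k ≤ ‖A ^ k‖` for all `k`, and Gelfand's formula would give `s ≤ ρ`. So `|x|`
is a positive eigenvector for `ρ`. The same holds for every eigenvalue `μ` with `‖μ‖ = ρ`, and then
the equality case of the triangle inequality in one row of `A x = μ x` forces `x = w |x|` for a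
single `w ∈ ℂ`, whence `μ x = A x = ρ x` and `μ = ρ`.
-/

open Filter Topology Finset
open scoped ComplexConjugate ComplexOrder

theorem spectrum.ofReal_le_spectralRadius_of_pow_le_norm {𝔸 : Type*} [NormedRing 𝔸]
    [NormedAlgebra ℂ 𝔸] [CompleteSpace 𝔸] {a : 𝔸} {s : ℝ} (hs : 0 ≤ s)
    (h : ∀ k : ℕ, s ^ k ≤ ‖a ^ k‖) : ENNReal.ofReal s ≤ spectralRadius ℂ a := by
  refine ge_of_tendsto (spectrum.pow_norm_pow_one_div_tendsto_nhds_spectralRadius a) ?_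
  filter_upwards [eventually_ne_atTop 0] with k hk
  refine ENNReal.ofReal_le_ofReal ?_
  calc s = (s ^ k) ^ (1 / k : ℝ) := by rw [one_div, Real.pow_rpow_inv_natCast hs hk]
    _ ≤ ‖a ^ k‖ ^ (1 / k : ℝ) := by gcongr; exact h k

theorem exists_gt_forall_mul_lt {ι : Type*} [Finite ι] {r : ℝ} {z w : ι → ℝ}
    (h : ∀ i, r * z i < w i) : ∃ s, r < s ∧ ∀ i, s * z i < w i := by
  have hnear : ∀ᶠ s in 𝓝 r, ∀ i, s * z i < w i := eventually_all.2 fun i =>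
    (continuous_mul_const (z i)).continuousAt.eventually_lt continuousAt_const (h i)
  obtain ⟨s, hs, hrs⟩ := ((hnear.filter_mono nhdsWithin_le_nhds).and
    (self_mem_nhdsWithin (s := Set.Ioi r))).exists
  exact ⟨s, hrs, hs⟩

theorem Complex.exists_forall_eq_norm_mul_of_norm_sum_eq {ι : Type*} {s : Finset ι}
    {f : ι → ℂ} (h : ‖∑ i ∈ s, f i‖ = ∑ i ∈ s, ‖f i‖) :
    ∃ w : ℂ, ∀ i ∈ s, f i = ‖f i‖ * w := by
  set S := ∑ i ∈ s, f i
  rcases eq_or_ne S 0 with hS | hS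
  · refine ⟨0, fun i hi => ?_⟩
    rw [hS, norm_zero, eq_comm, Finset.sum_eq_zero_iff_of_nonneg fun _ _ => norm_nonneg _] at h
    simpa using h i hi
  -- `∑ re (conj S * f i) = ‖S‖ ^ 2 = ∑ ‖conj S * f i‖`, while termwise `re ≤ ‖·‖`.
  have hre : ∀ i ∈ s, (conj S * f i).re = ‖conj S * f i‖ := by
    refine (Finset.sum_eq_sum_iff_of_le fun i _ => re_le_norm _).1 ?_
    rw [← Complex.re_sum, ← Finset.mul_sum, Complex.conj_mul']
    simp_rw [norm_mul, Complex.norm_conj]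
    rw [← Finset.mul_sum, ← h]
    norm_cast
    ring
  refine ⟨S / ‖S‖, fun i hi => ?_⟩
  have hreal : conj S * f i = ‖S‖ * ‖f i‖ := by
    have hnonneg : ((0 : ℝ) : ℂ) ≤ conj S * f i := by
      simpa using Complex.re_eq_norm.1 (hre i hi)
    rw [eq_re_of_ofReal_le hnonneg, hre i hi, norm_mul, Complex.norm_conj, ofReal_mul]
  have hSn : (‖S‖ : ℂ) ≠ 0 := by exact_mod_cast norm_ne_zero_iff.2 hS
  rw [mul_div_assoc', eq_div_iff hSn]
  refine mul_left_cancel₀ hSn ?_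
  linear_combination S * hreal - f i * Complex.mul_conj' S

namespace Matrix

variable {m n : Type*} [Fintype n]

theorem mulVec_mono_of_nonneg {A : Matrix m n ℝ} (hA : ∀ i j, 0 ≤ A i j) {v w : n → ℝ}
    (h : v ≤ w) : A *ᵥ v ≤ A *ᵥ w := fun i =>
  Finset.sum_le_sum fun j _ => mul_le_mul_of_nonneg_left (h j) (hA i j)

theorem mulVec_pos {A : Matrix m n ℝ} (hA : ∀ i j, 0 < A i j) {u : n → ℝ} (hu : 0 ≤ u)
    (hu0 : u ≠ 0) (i : m) : 0 < (A *ᵥ u) i := by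
  obtain ⟨j, hj⟩ := Function.ne_iff.1 hu0
  exact Finset.sum_pos' (fun k _ => mul_nonneg (hA i k).le (hu k))
    ⟨j, Finset.mem_univ _, mul_pos (hA i j) ((hu j).lt_of_ne' hj)⟩

theorem pos_of_mulVec_eq_smul {A : Matrix n n ℝ} (hA : ∀ i j, 0 < A i j) {r : ℝ} {u : n → ℝ}
    (hu : 0 ≤ u) (hu0 : u ≠ 0) (h : A *ᵥ u = r • u) : 0 < r ∧ ∀ i, 0 < u i := by
  have hAu := mulVec_pos hA hu hu0
  simp only [h, Pi.smul_apply, smul_eq_mul] at hAu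
  obtain ⟨i, -⟩ := Function.ne_iff.1 hu0
  have hr := pos_of_mul_pos_left (hAu i) (hu i)
  exact ⟨hr, fun j => pos_of_mul_pos_right (hAu j) hr.le⟩

theorem norm_smul_le_mulVec_norm {A : Matrix n n ℝ} (hA : ∀ i j, 0 ≤ A i j) {μ : ℂ}
    {x : n → ℂ} (hx : A.map (algebraMap ℝ ℂ) *ᵥ x = μ • x) :
    ‖μ‖ • (fun i => ‖x i‖) ≤ A *ᵥ fun i => ‖x i‖ := fun i =>
  calc ‖μ‖ * ‖x i‖ = ‖(A.map (algebraMap ℝ ℂ) *ᵥ x) i‖ := by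
        rw [hx, Pi.smul_apply, smul_eq_mul, norm_mul]
    _ ≤ ∑ j, ‖(A i j : ℂ) * x j‖ := norm_sum_le _ _
    _ = (A *ᵥ fun i => ‖x i‖) i := Finset.sum_congr rfl fun j _ => by
        simp [abs_of_nonneg (hA i j)]

theorem eq_norm_of_mulVec_norm_eq_norm_smul {A : Matrix n n ℝ} (hA : ∀ i j, 0 < A i j) {μ : ℂ}
    {x : n → ℂ} (hx0 : x ≠ 0) (hx : A.map (algebraMap ℝ ℂ) *ᵥ x = μ • x)
    (hAx : A *ᵥ (fun i => ‖x i‖) = ‖μ‖ • fun i => ‖x i‖) : μ = ‖μ‖ := by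
  set u : n → ℝ := fun i => ‖x i‖
  obtain ⟨i, -⟩ := Function.ne_iff.1 hx0
  have hrow : ‖∑ j, (A i j : ℂ) * x j‖ = ∑ j, ‖(A i j : ℂ) * x j‖ :=
    calc ‖∑ j, (A i j : ℂ) * x j‖ = ‖(A.map (algebraMap ℝ ℂ) *ᵥ x) i‖ := rfl
      _ = ‖μ‖ * u i := by rw [hx, Pi.smul_apply, smul_eq_mul, norm_mul]
      _ = (A *ᵥ u) i := by rw [hAx, Pi.smul_apply, smul_eq_mul]
      _ = ∑ j, ‖(A i j : ℂ) * x j‖ := Finset.sum_congr rfl fun j _ => by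
          simp [u, abs_of_pos (hA i j)]
  obtain ⟨w, hw⟩ := Complex.exists_forall_eq_norm_mul_of_norm_sum_eq hrow
  have hxw : x = w • (algebraMap ℝ ℂ ∘ u) := funext fun j => by
    have hj := hw j (mem_univ j)
    rw [norm_mul, Complex.norm_real, Real.norm_of_nonneg (hA i j).le, Complex.ofReal_mul,
      mul_assoc] at hj
    simpa [mul_comm w] using mul_left_cancel₀ (Complex.ofReal_ne_zero.2 (hA i j).ne') hj
  have hBu : A.map (algebraMap ℝ ℂ) *ᵥ (algebraMap ℝ ℂ ∘ u) = algebraMap ℝ ℂ ∘ (A *ᵥ u) :=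
    funext fun i => (RingHom.map_mulVec _ _ _ i).symm
  refine smul_left_injective ℂ hx0 ?_
  calc μ • x = A.map (algebraMap ℝ ℂ) *ᵥ x := hx.symm
    _ = w • (algebraMap ℝ ℂ ∘ (‖μ‖ • u)) := by rw [hxw, mulVec_smul, hBu, hAx]
    _ = (‖μ‖ : ℂ) • x := by
        rw [hxw]
        ext j
        simp only [Pi.smul_apply, Function.comp_apply, smul_eq_mul, Complex.coe_algebraMap,
          Complex.ofReal_mul]
        ring

variable [DecidableEq n]

theorem exists_mulVec_eq_smul_of_mem_spectrum {K : Type*} [Field K] {B : Matrix n n K} {μ : K}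
    (hμ : μ ∈ spectrum K B) : ∃ x ≠ 0, B *ᵥ x = μ • x := by
  rw [← spectrum_toLin', ← Module.End.hasEigenvalue_iff_mem_spectrum] at hμ
  obtain ⟨x, hx⟩ := hμ.exists_hasEigenvector
  exact ⟨x, hx.2, by simpa using hx.apply_eq_smul⟩

theorem pow_smul_le_pow_mulVec {A : Matrix n n ℝ} (hA : ∀ i j, 0 ≤ A i j) {s : ℝ} (hs : 0 ≤ s)
    {z : n → ℝ} (h : s • z ≤ A *ᵥ z) : ∀ k : ℕ, s ^ k • z ≤ (A ^ k) *ᵥ z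
  | 0 => by simp
  | k + 1 => calc
      s ^ (k + 1) • z = s ^ k • (s • z) := by rw [pow_succ, mul_smul]
      _ ≤ s ^ k • (A *ᵥ z) := smul_le_smul_of_nonneg_left h (pow_nonneg hs k)
      _ = A *ᵥ (s ^ k • z) := (mulVec_smul _ _ _).symm
      _ ≤ A *ᵥ ((A ^ k) *ᵥ z) := mulVec_mono_of_nonneg hA (pow_smul_le_pow_mulVec hA hs h k)
      _ = (A ^ (k + 1)) *ᵥ z := by rw [mulVec_mulVec, pow_succ']

section LinftyOpNorm

/- The spectral radius does not depend on a norm: any Banach algebra norm on matrices gives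
Gelfand's formula, and the `ℓ∞` operator norm is the one bounding `mulVec` in the sup norm. -/
attribute [local instance] Matrix.linftyOpNormedRing Matrix.linftyOpNormedAlgebra

theorem ofReal_le_spectralRadius_of_smul_le_mulVec {A : Matrix n n ℝ} (hA : ∀ i j, 0 ≤ A i j)
    {z : n → ℝ} (hz : 0 ≤ z) (hz0 : z ≠ 0) {s : ℝ} (hs : 0 ≤ s) (h : s • z ≤ A *ᵥ z) :
    ENNReal.ofReal s ≤ spectralRadius ℂ (A.map (algebraMap ℝ ℂ)) := by
  set ζ : n → ℂ := algebraMap ℝ ℂ ∘ z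
  have hζ : 0 < ‖ζ‖ := norm_pos_iff.2 fun h0 => hz0 <| funext fun i => by
    simpa [ζ] using congrFun h0 i
  refine spectrum.ofReal_le_spectralRadius_of_pow_le_norm hs fun k =>
    le_of_mul_le_mul_right ?_ hζ
  calc s ^ k * ‖ζ‖ ≤ ‖A.map (algebraMap ℝ ℂ) ^ k *ᵥ ζ‖ := by
        rw [← abs_of_nonneg (pow_nonneg hs k), ← Real.norm_eq_abs, ← norm_smul,
          pi_norm_le_iff_of_nonneg (norm_nonneg _)]
        intro i
        refine le_trans ?_ (norm_le_pi_norm _ i)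
        rw [← Matrix.map_pow, ← RingHom.map_mulVec]
        simpa [ζ, abs_of_nonneg (hz i), abs_of_nonneg hs] using
          (pow_smul_le_pow_mulVec hA hs h k i).trans (le_abs_self _)
    _ ≤ ‖A.map (algebraMap ℝ ℂ) ^ k‖ * ‖ζ‖ := linfty_opNorm_mulVec _ _

theorem exists_mem_spectrum_nnnorm_eq_spectralRadius [Nonempty n] (B : Matrix n n ℂ) :
    ∃ μ ∈ spectrum ℂ B, (‖μ‖₊ : ENNReal) = spectralRadius ℂ B :=
  spectrum.exists_nnnorm_eq_spectralRadius_of_nonempty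
    (spectrum.nonempty_of_isAlgClosed_of_finiteDimensional ℂ B)

end LinftyOpNorm

theorem mulVec_eq_smul_of_smul_le_mulVec {A : Matrix n n ℝ} (hA : ∀ i j, 0 < A i j) {r : ℝ}
    (hr : 0 ≤ r) (hρ : spectralRadius ℂ (A.map (algebraMap ℝ ℂ)) ≤ ENNReal.ofReal r)
    {u : n → ℝ} (hu : 0 ≤ u) (hu0 : u ≠ 0) (h : r • u ≤ A *ᵥ u) : A *ᵥ u = r • u := by
  by_contra hne
  set z := A *ᵥ u
  have hz : ∀ i, 0 < z i := mulVec_pos hA hu hu0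
  have hAz : ∀ i, r * z i < (A *ᵥ z) i := fun i => by
    have := mulVec_pos hA (sub_nonneg.2 h) (sub_ne_zero.2 hne) i
    rwa [mulVec_sub, mulVec_smul, Pi.sub_apply, Pi.smul_apply, smul_eq_mul, sub_pos] at this
  obtain ⟨s, hrs, hs⟩ := exists_gt_forall_mul_lt hAz
  obtain ⟨i, -⟩ := Function.ne_iff.1 hu0
  have hsρ := ofReal_le_spectralRadius_of_smul_le_mulVec (fun i j => (hA i j).le)
    (fun i => (hz i).le) (fun h0 => (hz i).ne' (congrFun h0 i)) (hr.trans hrs.le)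
    (fun i => (hs i).le)
  exact hrs.not_ge ((ENNReal.ofReal_le_ofReal_iff hr).1 (hsρ.trans hρ))

theorem mulVec_norm_eq_norm_smul_of_spectralRadius_le {A : Matrix n n ℝ}
    (hA : ∀ i j, 0 < A i j) {μ : ℂ} {x : n → ℂ} (hx0 : x ≠ 0)
    (hx : A.map (algebraMap ℝ ℂ) *ᵥ x = μ • x)
    (hρ : spectralRadius ℂ (A.map (algebraMap ℝ ℂ)) ≤ ENNReal.ofReal ‖μ‖) :
    A *ᵥ (fun i => ‖x i‖) = ‖μ‖ • fun i => ‖x i‖ := by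
  refine mulVec_eq_smul_of_smul_le_mulVec hA (norm_nonneg μ) hρ (fun i => norm_nonneg _) ?_
    (norm_smul_le_mulVec_norm (fun i j => (hA i j).le) hx)
  obtain ⟨i, hi⟩ := Function.ne_iff.1 hx0
  exact Function.ne_iff.2 ⟨i, norm_ne_zero_iff.2 hi⟩

end Matrix

/-- Perron–Frobenius: a strictly positive real `n × n` matrix (with `n ≥ 1`) has a
positive eigenvalue `λ₁` with a strictly positive eigenvector, and every complex
eigenvalue `μ ≠ λ₁` satisfies `|μ| < λ₁`. -/
theorem positive_matrix_perron_eigenvalue_dominates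
    (n : ℕ) (hn : 1 ≤ n) (A : Matrix (Fin n) (Fin n) ℝ)
    (hA : ∀ i j, 0 < A i j) :
    ∃ lam : ℝ, 0 < lam ∧
      (∃ v : Fin n → ℝ, (∀ i, 0 < v i) ∧ A.mulVec v = lam • v) ∧
      (∀ μ : ℂ, (Matrix.charpoly (A.map (algebraMap ℝ ℂ))).IsRoot μ →
        μ ≠ (lam : ℂ) → ‖μ‖ < lam) := by
  have : Nonempty (Fin n) := ⟨⟨0, hn⟩⟩
  obtain ⟨μ₀, hμ₀, hρ⟩ := (A.map (algebraMap ℝ ℂ)).exists_mem_spectrum_nnnorm_eq_spectralRadius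
  rw [← enorm_eq_nnnorm, ← ofReal_norm] at hρ
  obtain ⟨x₀, hx₀0, hx₀⟩ := Matrix.exists_mulVec_eq_smul_of_mem_spectrum hμ₀
  have hv := Matrix.mulVec_norm_eq_norm_smul_of_spectralRadius_le hA hx₀0 hx₀ hρ.ge
  obtain ⟨hr, hvpos⟩ := Matrix.pos_of_mulVec_eq_smul hA (fun i => norm_nonneg _)
    (fun h => hx₀0 (funext fun i => norm_eq_zero.1 (congrFun h i))) hv
  refine ⟨‖μ₀‖, hr, ⟨_, hvpos, hv⟩, fun μ hμ hne => lt_of_le_of_ne ?_ fun heq => hne ?_⟩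
  · rw [← ENNReal.ofReal_le_ofReal_iff (norm_nonneg _), hρ, ofReal_norm, enorm_eq_nnnorm]
    exact le_iSup₂ (α := ENNReal) μ (Matrix.mem_spectrum_iff_isRoot_charpoly.2 hμ)
  · obtain ⟨x, hx0, hx⟩ := Matrix.exists_mulVec_eq_smul_of_mem_spectrum
      (Matrix.mem_spectrum_iff_isRoot_charpoly.2 hμ)
    rw [Matrix.eq_norm_of_mulVec_norm_eq_norm_smul hA hx0 hx
      (Matrix.mulVec_norm_eq_norm_smul_of_spectralRadius_le hA hx0 hx (heq ▸ hρ.ge)), heq]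
end

section
/- Let n ≥ 1 and let A be an n×n real matrix all of whose entries are strictly positive. Suppose v is a vector with all entries strictly positive satisfying A·v = λ·v for some real λ, and w is a nonzero vector with all entries nonnegative satisfying A·w = μ·w for some real μ. Then μ = λ and, moreover, all entries of w are strictly positive. -/
lemma perron_aux (n : ℕ) (A : Matrix (Fin n) (Fin n) ℝ)
    (hA : ∀ i j, 0 < A i j) [Nonempty (Fin n)]
    (α β : ℝ) (u z : Fin n → ℝ)
    (hu : ∀ i, 0 < u i) (hz : ∀ i, 0 < z i)
    (hAu : A.mulVec u = α • u) (hAz : A.mulVec z = β • z) : β ≤ α := by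
  obtain ⟨i₀, -, hi₀⟩ := Finset.exists_min_image Finset.univ (fun i => u i / z i)
    ⟨Classical.arbitrary (Fin n), Finset.mem_univ _⟩
  set c := u i₀ / z i₀ with hc
  have hcz : c * z i₀ = u i₀ := div_mul_cancel₀ _ (hz i₀).ne'
  have hub : ∀ j, c * z j ≤ u j := by
    intro j
    have := hi₀ j (Finset.mem_univ j)
    calc c * z j ≤ (u j / z j) * z j := by
          exact mul_le_mul_of_nonneg_right this (hz j).le
      _ = u j := div_mul_cancel₀ _ (hz j).ne'
  have key : β * u i₀ ≤ α * u i₀ := by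
    have h1 : (A.mulVec u) i₀ = α * u i₀ := by rw [hAu]; rfl
    have h2 : (A.mulVec z) i₀ = β * z i₀ := by rw [hAz]; rfl
    have h3 : c * (A.mulVec z) i₀ ≤ (A.mulVec u) i₀ := by
      simp only [Matrix.mulVec, dotProduct, Finset.mul_sum]
      apply Finset.sum_le_sum
      intro j _
      calc c * (A i₀ j * z j) = A i₀ j * (c * z j) := by ring
        _ ≤ A i₀ j * u j := mul_le_mul_of_nonneg_left (hub j) (hA i₀ j).le
    rw [h1, h2] at h3
    calc β * u i₀ = c * (β * z i₀) := by rw [← hcz]; ring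
      _ ≤ α * u i₀ := h3
  exact le_of_mul_le_mul_right key (hu i₀)

/-- Perron–Frobenius: for a strictly positive matrix, only the principal eigenvalue
(the one with a strictly positive eigenvector) admits a nonzero nonnegative
eigenvector, and any such eigenvector is in fact strictly positive. -/
theorem positive_matrix_nonneg_eigenvector_is_perron
    (n : ℕ) (hn : 1 ≤ n) (A : Matrix (Fin n) (Fin n) ℝ)
    (hA : ∀ i j, 0 < A i j)
    (lam μ : ℝ) (v w : Fin n → ℝ)
    (hv : ∀ i, 0 < v i) (hAv : A.mulVec v = lam • v)
    (hw0 : w ≠ 0) (hw : ∀ i, 0 ≤ w i) (hAw : A.mulVec w = μ • w) :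
    μ = lam ∧ ∀ i, 0 < w i := by
  have : Nonempty (Fin n) := ⟨⟨0, hn⟩⟩
  obtain ⟨j₀, hj₀⟩ : ∃ j, w j ≠ 0 := by
    by_contra h
    push_neg at h
    exact hw0 (funext h)
  have hwj₀ : 0 < w j₀ := lt_of_le_of_ne (hw j₀) (Ne.symm hj₀)
  have hAwpos : ∀ i, 0 < (A.mulVec w) i := by
    intro i
    have : 0 < ∑ j, A i j * w j := by
      apply Finset.sum_pos' (fun j _ => mul_nonneg (hA i j).le (hw j))
      exact ⟨j₀, Finset.mem_univ _, mul_pos (hA i j₀) hwj₀⟩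
    simpa [Matrix.mulVec, dotProduct] using this
  have hμpos : 0 < μ := by
    have := hAwpos j₀
    rw [hAw] at this
    have h' : 0 < μ * w j₀ := by simpa using this
    rcases mul_pos_iff.mp h' with h | h
    · exact h.1
    · exact absurd h.2 (not_lt.mpr hwj₀.le)
  have hwpos : ∀ i, 0 < w i := by
    intro i
    have := hAwpos i
    rw [hAw] at this
    have h' : 0 < μ * w i := by simpa using this
    rcases mul_pos_iff.mp h' with h | h
    · exact h.2
    · exact absurd h.1 (not_lt.mpr hμpos.le)
  refine ⟨le_antisymm ?_ ?_, hwpos⟩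
  · exact perron_aux n A hA lam μ v w hv hwpos hAv hAw
  · exact perron_aux n A hA μ lam w v hwpos hv hAw hAv
end

section
/- Fix an integer N ≥ 1 and real numbers f, g, α, β, D₀, p with β > 0. Suppose Γ ≠ 0 and Λ are real numbers satisfying p·f/N + p²·D₀ = −(1/Γ + 1)·(α − β·Γ) and Λ = −N·(α − Γ·β) − p·g. Define R(n) = Γⁿ/((N−n)!·n!) for 0 ≤ n ≤ N, with the conventions R(−1) = 0 and R(N+1) = 0. Then for every 0 ≤ n ≤ N: [p·(n·f/N − g) + p²·n·D₀]·R(n) + (N−n+1)·α·R(n−1) + (n+1)·β·R(n+1) − ((N−n)·α + n·β)·R(n) = Λ·R(n). -/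
/-- Verification of the trial eigenvector ansatz `R(n) = Γⁿ/((N−n)! n!)` for the
principal eigenvalue of the hybrid matrix of the ion-channel (binomial) model:
given the pair of relations determining `Γ` and `Λ`, the eigenvalue equation holds
for every `0 ≤ n ≤ N` (with the conventions `R(−1) = 0` and `R(N+1) = 0`). -/
theorem binomial_trial_eigenvector_eigenvalue_equation
    (N : ℕ) (hN : 1 ≤ N) (f g α β D₀ p : ℝ) (hβ : 0 < β)
    (Γ Λ : ℝ) (hΓ0 : Γ ≠ 0)
    (hΓ : p * f / N + p ^ 2 * D₀ = -(1 / Γ + 1) * (α - β * Γ))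
    (hΛ : Λ = -(N : ℝ) * (α - Γ * β) - p * g)
    (R : ℕ → ℝ)
    (hR : ∀ n, R n = if n ≤ N then Γ ^ n / (((N - n).factorial : ℝ) * (n.factorial : ℝ)) else 0) :
    ∀ n, n ≤ N →
      (p * ((n : ℝ) * f / N - g) + p ^ 2 * (n : ℝ) * D₀) * R n
        + ((N : ℝ) - n + 1) * α * (if n = 0 then 0 else R (n - 1))
        + ((n : ℝ) + 1) * β * R (n + 1)
        - (((N : ℝ) - n) * α + (n : ℝ) * β) * R n
      = Λ * R n := by
  intro n hn
  have hfac : ∀ m : ℕ, ((m.factorial : ℝ)) ≠ 0 := fun m => by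
    exact_mod_cast m.factorial_ne_zero
  have hRn : R n = Γ ^ n / (((N - n).factorial : ℝ) * (n.factorial : ℝ)) := by
    rw [hR]; simp [hn]
  have hNn : ((N - n : ℕ) : ℝ) = (N : ℝ) - n := Nat.cast_sub hn
  -- plus term
  have hplus : ((n : ℝ) + 1) * β * R (n + 1) = β * Γ * ((N : ℝ) - (n : ℝ)) * R n := by
    rcases eq_or_lt_of_le hn with h | h
    · subst h
      rw [hR]
      simp
    · have h1 : n + 1 ≤ N := h
      have hR1 : R (n + 1) = Γ ^ (n + 1) /
          (((N - (n + 1)).factorial : ℝ) * ((n + 1).factorial : ℝ)) := by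
        rw [hR]; simp [h1]
      have hsub : N - n = (N - (n + 1)) + 1 := by omega
      have hfac1 : ((N - n).factorial : ℝ) = ((N : ℝ) - n) * ((N - (n + 1)).factorial : ℝ) := by
        rw [hsub, Nat.factorial_succ]
        push_cast
        have : ((N - (n+1) : ℕ) : ℝ) = (N : ℝ) - n - 1 := by
          have := Nat.cast_sub h1 (R := ℝ); push_cast at this ⊢; linarith
        rw [this]; ring
      have hfac2 : (((n + 1).factorial : ℝ)) = ((n : ℝ) + 1) * (n.factorial : ℝ) := by
        rw [Nat.factorial_succ]; push_cast; ring
      rw [hR1, hRn, hfac1, hfac2]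
      have hNn0 : (N : ℝ) - n ≠ 0 := by
        have : (n : ℝ) < N := by exact_mod_cast h
        linarith
      field_simp
      ring
  -- minus term
  have hminus : ((N : ℝ) - n + 1) * α * (if n = 0 then 0 else R (n - 1))
      = α * (n : ℝ) / Γ * R n := by
    rcases Nat.eq_zero_or_pos n with h0 | h0
    · subst h0; simp
    · obtain ⟨k, rfl⟩ : ∃ k, n = k + 1 := ⟨n - 1, by omega⟩
      have hk : k ≤ N := by omega
      have hRk : R k = Γ ^ k / (((N - k).factorial : ℝ) * (k.factorial : ℝ)) := by
        rw [hR]; simp [hk]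
      have hsub : N - k = (N - (k + 1)) + 1 := by omega
      have hfac1 : ((N - k).factorial : ℝ)
          = ((N : ℝ) - k) * ((N - (k + 1)).factorial : ℝ) := by
        rw [hsub, Nat.factorial_succ]
        push_cast
        have : ((N - (k+1) : ℕ) : ℝ) = (N : ℝ) - k - 1 := by
          have := Nat.cast_sub hn (R := ℝ); push_cast at this ⊢; linarith
        rw [this]; ring
      have hfac2 : (((k + 1).factorial : ℝ)) = ((k : ℝ) + 1) * (k.factorial : ℝ) := by
        rw [Nat.factorial_succ]; push_cast; ring
      simp only [Nat.add_sub_cancel, if_neg (Nat.succ_ne_zero k)]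
      rw [hRk, hRn, hfac1, hfac2]
      push_cast
      have hpow : Γ ^ (k + 1) = Γ * Γ ^ k := by ring
      have hNk0 : (N : ℝ) - k ≠ 0 := by
        have : (k : ℝ) < N := by exact_mod_cast (by omega : k < N)
        linarith
      rw [hpow]
      field_simp
      ring
  have key : (p * ((n : ℝ) * f / N - g) + p ^ 2 * (n : ℝ) * D₀) + α * (n : ℝ) / Γ
      + β * Γ * ((N : ℝ) - n) - (((N : ℝ) - n) * α + (n : ℝ) * β) = Λ := by
    have h1 : (p * ((n : ℝ) * f / N - g) + p ^ 2 * (n : ℝ) * D₀)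
        = (n : ℝ) * (p * f / N + p ^ 2 * D₀) - p * g := by ring
    rw [h1, hΓ, hΛ]
    field_simp
    ring
  rw [hminus, hplus]
  linear_combination R n * key
end

section
/- Fix an integer N ≥ 1 and real numbers f, g, α, β, D₀, p with β ≠ 0. Suppose Γ ≠ 0 and Λ are real numbers satisfying p·f/N + p²·D₀ = −(1/Γ + 1)·(α − β·Γ) and Λ = −N·(α − Γ·β) − p·g. Then Λ satisfies the quadratic equation Λ² + σ·Λ − h = 0, where σ = p·(2g − f − N·p·D₀) + N·(α + β) and h = p·[ g·( p·(f − g) + N·p²·D₀ − N·(α + β) ) + N·α·( f + N·p·D₀ ) ]. -/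
/-- Eliminating `Γ` from the pair of relations determining the principal eigenvalue
`Λ` of the hybrid ion-channel model yields the quadratic equation
`Λ² + σ Λ − h = 0`. -/
theorem binomial_principal_eigenvalue_quadratic
    (N : ℕ) (hN : 1 ≤ N) (f g α β D₀ p : ℝ) (hβ : β ≠ 0)
    (Γ Λ : ℝ) (hΓ0 : Γ ≠ 0)
    (hΓ : p * f / N + p ^ 2 * D₀ = -(1 / Γ + 1) * (α - β * Γ))
    (hΛ : Λ = -(N : ℝ) * (α - Γ * β) - p * g)
    (σ h : ℝ)
    (hσ : σ = p * (2 * g - f - (N : ℝ) * p * D₀) + (N : ℝ) * (α + β))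
    (hh : h = p * (g * (p * (f - g) + (N : ℝ) * p ^ 2 * D₀ - (N : ℝ) * (α + β))
        + (N : ℝ) * α * (f + (N : ℝ) * p * D₀))) :
    Λ ^ 2 + σ * Λ - h = 0 := by
  have hN0 : (N:ℝ) ≠ 0 := Nat.cast_ne_zero.mpr (by omega)
  subst hΛ hσ hh
  field_simp at hΓ
  linear_combination (-(N:ℝ) * β) * hΓ
end

section
/- Fix real numbers f, x, p, D₀ with 1 − p − p²·D₀ ≠ 0, and set Γ = f/(1 − p − p²·D₀) and Λ = Γ − f − p·x. Define R(n) = Γⁿ/n! for n ∈ ℕ. Then for every n ∈ ℕ: [p·(−x + n) + p²·D₀·n]·R(n) + f·R(n−1) + (n+1)·R(n+1) − (f + n)·R(n) = Λ·R(n), where the term f·R(n−1) is omitted (set to zero) when n = 0. -/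
/-! The ansatz `R(n) = Γⁿ/n!` is the Poisson profile: it satisfies `(n+1) R(n+1) = Γ R(n)` and
`n R(n) = Γ R(n-1)`. The first identity turns the death term into `Γ R(n)`; the second, together
with `f = (1 - p - p² D₀) Γ`, cancels the birth term against the `n`-linear part of the diagonal,
leaving the constant `Γ - f - p x`. -/

section PoissonProfile

variable {K : Type*} [Field K] [CharZero K]

theorem succ_mul_pow_div_factorial_succ (Γ : K) (n : ℕ) :
    ((n : K) + 1) * (Γ ^ (n + 1) / ((n + 1).factorial : K)) = Γ * (Γ ^ n / (n.factorial : K)) := by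
  have hfac : (n.factorial : K) ≠ 0 := Nat.cast_ne_zero.mpr n.factorial_ne_zero
  rw [Nat.factorial_succ, Nat.cast_mul, Nat.cast_succ]
  field_simp
  ring

theorem natCast_mul_pow_div_factorial (Γ : K) (n : ℕ) :
    (n : K) * (Γ ^ n / (n.factorial : K))
      = Γ * (if n = 0 then 0 else Γ ^ (n - 1) / ((n - 1).factorial : K)) := by
  cases n with
  | zero => simp
  | succ m => simpa using succ_mul_pow_div_factorial_succ Γ m

end PoissonProfile

/-- Verification of the trial eigenvector ansatz `R(n) = Γⁿ/n!` for the principal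
eigenvalue of the hybrid operator of the Poisson-type model: with
`Γ = f/(1 − p − p² D₀)` and `Λ = Γ − f − p x`, the eigenvalue equation holds for all
`n ∈ ℕ` (with the term `f·R(n−1)` omitted when `n = 0`). -/
theorem poisson_trial_eigenvector_eigenvalue_equation
    (f x p D₀ : ℝ) (hden : 1 - p - p ^ 2 * D₀ ≠ 0)
    (Γ Λ : ℝ) (hΓ : Γ = f / (1 - p - p ^ 2 * D₀)) (hΛ : Λ = Γ - f - p * x)
    (R : ℕ → ℝ) (hR : ∀ n, R n = Γ ^ n / (n.factorial : ℝ)) :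
    ∀ n : ℕ,
      (p * (-x + (n : ℝ)) + p ^ 2 * D₀ * (n : ℝ)) * R n
        + f * (if n = 0 then 0 else R (n - 1))
        + ((n : ℝ) + 1) * R (n + 1)
        - (f + (n : ℝ)) * R n
      = Λ * R n := by
  intro n
  have hf : f = (1 - p - p ^ 2 * D₀) * Γ := by
    rw [hΓ, mul_div_cancel₀ _ hden]
  have hdeath : ((n : ℝ) + 1) * R (n + 1) = Γ * R n := by
    simpa only [hR] using succ_mul_pow_div_factorial_succ Γ n
  have hbirth : (n : ℝ) * R n = Γ * (if n = 0 then 0 else R (n - 1)) := by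
    simpa only [hR, apply_ite R] using natCast_mul_pow_div_factorial Γ n
  rw [hΛ]
  linear_combination hdeath - (1 - p - p ^ 2 * D₀) * hbirth
    + (if n = 0 then 0 else R (n - 1)) * hf
end

section
/- Let n ≥ 1 and let A be an n×n real matrix whose columns all sum to zero (∑_i A i j = 0 for all j). Suppose the kernel of the linear map v ↦ A·v is one-dimensional and is spanned by a vector ρ with ∑_i ρ i ≠ 0. Then for every vector b with ∑_i b i = 0, there exists a unique vector Z such that A·Z = b and ∑_i Z i = 0. -/
/-! An endomorphism of a finite-dimensional space which maps a subspace `W` into itself and is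
injective on it is bijective on `W`. Take `W` the hyperplane `∑ i, v i = 0`: zero column sums say
that `A` maps every vector into `W`, and `A` is injective on `W` because its kernel is spanned
by `ρ ∉ W`. -/

open Matrix

theorem LinearMap.existsUnique_apply_eq_and_mem {K V : Type*} [DivisionRing K] [AddCommGroup V]
    [Module K V] [FiniteDimensional K V] (f : V →ₗ[K] V) {W : Submodule K V}
    (hmaps : ∀ x ∈ W, f x ∈ W) (hdisj : Disjoint (LinearMap.ker f) W) {b : V} (hb : b ∈ W) :
    ∃! z, f z = b ∧ z ∈ W := by
  set g : W →ₗ[K] W := f.restrict hmaps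
  have hinj : Function.Injective g := by
    rw [← LinearMap.ker_eq_bot, eq_bot_iff]
    rintro x (hx : g x = 0)
    have hfx : f x = 0 := congrArg Subtype.val hx
    simpa using hdisj.le_bot ⟨hfx, x.2⟩
  obtain ⟨z, hz⟩ := LinearMap.injective_iff_surjective.mp hinj ⟨b, hb⟩
  refine ⟨z, ⟨congrArg Subtype.val hz, z.2⟩, ?_⟩
  rintro y ⟨hy, hyW⟩
  have : g ⟨y, hyW⟩ = g z := Subtype.ext (hy.trans (congrArg Subtype.val hz).symm)
  exact congrArg Subtype.val (hinj this)

def sumZeroSubmodule (R ι : Type*) [Semiring R] [Fintype ι] : Submodule R (ι → R) where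
  carrier := {v | ∑ i, v i = 0}
  add_mem' {u v} hu hv := by simp_all [Finset.sum_add_distrib]
  zero_mem' := by simp
  smul_mem' c v hv := by simp_all [← Finset.mul_sum]

@[simp]
theorem mem_sumZeroSubmodule {R ι : Type*} [Semiring R] [Fintype ι] {v : ι → R} :
    v ∈ sumZeroSubmodule R ι ↔ ∑ i, v i = 0 :=
  Iff.rfl

namespace Matrix

variable {R ι : Type*} [CommRing R] [Fintype ι] {A : Matrix ι ι R}

theorem sum_mulVec_eq_zero_of_sum_col_eq_zero (hcol : ∀ j, ∑ i, A i j = 0) (v : ι → R) :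
    ∑ i, (A *ᵥ v) i = 0 := by
  have h1A : (fun _ => 1) ᵥ* A = 0 := funext fun j => by simp [vecMul, dotProduct, hcol]
  simpa [dotProduct, h1A] using dotProduct_mulVec (fun _ => (1 : R)) A v

theorem disjoint_ker_mulVecLin_sumZeroSubmodule [IsDomain R] {ρ : ι → R}
    (hρsum : ∑ i, ρ i ≠ 0) (hker : ∀ v, A *ᵥ v = 0 → ∃ c : R, v = c • ρ) :
    Disjoint (LinearMap.ker A.mulVecLin) (sumZeroSubmodule R ι) := by
  rw [Submodule.disjoint_def]
  intro v hAv hv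
  obtain ⟨c, rfl⟩ := hker v hAv
  have hc : c * ∑ i, ρ i = 0 := by simpa [Finset.mul_sum] using hv
  simp [(mul_eq_zero.mp hc).resolve_right hρsum]

end Matrix

theorem fredholm_alternative_markov_generator_general
    (n : ℕ) (A : Matrix (Fin n) (Fin n) ℝ)
    (hcol : ∀ j, ∑ i, A i j = 0)
    (ρ : Fin n → ℝ) (hρsum : ∑ i, ρ i ≠ 0)
    (hker : ∀ v : Fin n → ℝ, A.mulVec v = 0 ↔ ∃ c : ℝ, v = c • ρ) :
    ∀ b : Fin n → ℝ, ∑ i, b i = 0 →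
      ∃! Z : Fin n → ℝ, A.mulVec Z = b ∧ ∑ i, Z i = 0 := by
  intro b hb
  have hmaps : ∀ v ∈ sumZeroSubmodule ℝ (Fin n), A.mulVecLin v ∈ sumZeroSubmodule ℝ (Fin n) :=
    fun v _ => sum_mulVec_eq_zero_of_sum_col_eq_zero hcol v
  exact A.mulVecLin.existsUnique_apply_eq_and_mem hmaps
    (disjoint_ker_mulVecLin_sumZeroSubmodule hρsum fun v => (hker v).mp) hb

/-- Fredholm-alternative solvability for a singular Markov generator: if the columns
of `A` sum to zero and the kernel of `v ↦ A v` is one-dimensional, spanned by a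
vector `ρ` whose entries do not sum to zero, then for every `b` with `∑ b = 0` there
is a unique `Z` with `A Z = b` and `∑ Z = 0`. -/
theorem fredholm_alternative_markov_generator
    (n : ℕ) (hn : 1 ≤ n) (A : Matrix (Fin n) (Fin n) ℝ)
    (hcol : ∀ j, ∑ i, A i j = 0)
    (ρ : Fin n → ℝ) (hρsum : ∑ i, ρ i ≠ 0)
    (hker : ∀ v : Fin n → ℝ, A.mulVec v = 0 ↔ ∃ c : ℝ, v = c • ρ) :
    ∀ b : Fin n → ℝ, ∑ i, b i = 0 →
      ∃! Z : Fin n → ℝ, A.mulVec Z = b ∧ ∑ i, Z i = 0 :=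
  fredholm_alternative_markov_generator_general n A hcol ρ hρsum hker
end

section
/- Let n ≥ 1 and let Q be an n×n real matrix whose columns all sum to zero (∑_i Q i j = 0 for all j), and suppose the kernel of the linear map v ↦ Q·v is one-dimensional and spanned by a vector ρ with ∑_i ρ i = 1. Let F : Fin n → ℝ and Λ ∈ ℝ. Then there exists a vector R with Q·R = (fun i => (Λ − F i)·ρ i) if and only if Λ = ∑_i F i · ρ i. -/
/-- Solvability condition from the Fredholm alternative determining the first-order
coefficient of the principal eigenvalue: with `Q` a generator whose columns sum to
zero and whose kernel is spanned by the stationary vector `ρ` (normalized to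
`∑ ρ = 1`), the equation `Q R = (Λ − F) ρ` has a solution iff `Λ = ∑ F ρ`. -/
theorem fredholm_solvability_condition
    (n : ℕ) (hn : 1 ≤ n) (Q : Matrix (Fin n) (Fin n) ℝ)
    (hcol : ∀ j, ∑ i, Q i j = 0)
    (ρ : Fin n → ℝ) (hρsum : ∑ i, ρ i = 1)
    (hker : ∀ v : Fin n → ℝ, Q.mulVec v = 0 ↔ ∃ c : ℝ, v = c • ρ)
    (F : Fin n → ℝ) (Λ : ℝ) :
    (∃ R : Fin n → ℝ, Q.mulVec R = fun i => (Λ - F i) * ρ i) ↔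
      Λ = ∑ i, F i * ρ i := by
  -- sum of Q.mulVec v is 0
  have key : ∀ v : Fin n → ℝ, ∑ i, Q.mulVec v i = 0 := by
    intro v
    simp only [Matrix.mulVec, dotProduct]
    rw [Finset.sum_comm]
    simp only [← Finset.sum_mul]
    simp [hcol]
  constructor
  · rintro ⟨R, hR⟩
    have := key R
    rw [hR] at this
    simp only [sub_mul] at this
    rw [Finset.sum_sub_distrib, ← Finset.mul_sum, hρsum, mul_one, sub_eq_zero] at this
    exact this
  · intro hΛ
    -- linear maps
    set L : (Fin n → ℝ) →ₗ[ℝ] (Fin n → ℝ) := Q.mulVecLin with hL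
    set φ : (Fin n → ℝ) →ₗ[ℝ] ℝ :=
      { toFun := fun v => ∑ i, v i
        map_add' := by intro a b; simp [Finset.sum_add_distrib]
        map_smul' := by intro c a; simp [Finset.mul_sum] }
    have hρne : ρ ≠ 0 := by
      intro h
      rw [h] at hρsum
      simp at hρsum
    have hkerL : LinearMap.ker L = Submodule.span ℝ {ρ} := by
      ext v
      simp only [LinearMap.mem_ker, hL, Matrix.mulVecLin_apply]
      rw [hker v, Submodule.mem_span_singleton]
      constructor
      · rintro ⟨c, rfl⟩; exact ⟨c, rfl⟩
      · rintro ⟨c, rfl⟩; exact ⟨c, rfl⟩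
    have hdimker : Module.finrank ℝ (LinearMap.ker L) = 1 := by
      rw [hkerL, finrank_span_singleton hρne]
    have hdimrange : Module.finrank ℝ (LinearMap.range L) = n - 1 := by
      have := LinearMap.finrank_range_add_finrank_ker L
      rw [hdimker] at this
      simp only [Module.finrank_pi, Fintype.card_fin] at this
      omega
    have hφsurj : LinearMap.range φ = ⊤ := by
      rw [LinearMap.range_eq_top]
      intro x
      exact ⟨x • ρ, by simp [φ, ← Finset.mul_sum, hρsum]⟩
    have hdimkerφ : Module.finrank ℝ (LinearMap.ker φ) = n - 1 := by
      have := LinearMap.finrank_range_add_finrank_ker φ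
      rw [hφsurj] at this
      simp only [Module.finrank_pi, Fintype.card_fin, finrank_top, Module.finrank_self] at this
      omega
    have hle : LinearMap.range L ≤ LinearMap.ker φ := by
      rintro x ⟨v, rfl⟩
      simp only [LinearMap.mem_ker]
      exact key v
    have heq : LinearMap.range L = LinearMap.ker φ := by
      apply Submodule.eq_of_le_of_finrank_le hle
      rw [hdimrange, hdimkerφ]
    have hbmem : (fun i => (Λ - F i) * ρ i) ∈ LinearMap.ker φ := by
      simp only [LinearMap.mem_ker]
      show ∑ i, (Λ - F i) * ρ i = 0
      simp only [sub_mul]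
      rw [Finset.sum_sub_distrib, ← Finset.mul_sum, hρsum, mul_one, sub_eq_zero]
      exact hΛ
    rw [← heq] at hbmem
    obtain ⟨R, hR⟩ := hbmem
    exact ⟨R, hR⟩
end

section
/- Let f > 0 and define the Poisson distribution ρ(n) = fⁿ·e^{−f}/n! and the function Z(n) = (n − f)·ρ(n) for n ∈ ℕ. Then for every n ∈ ℕ: f·Z(n−1) + (n+1)·Z(n+1) − (f + n)·Z(n) = (f − n)·ρ(n), where the term f·Z(n−1) is omitted (set to zero) when n = 0. -/
/-- For the Poisson distribution `ρ(n) = fⁿ e^{−f}/n!`, the function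
`Z(n) = (n − f) ρ(n)` solves the Fredholm equation of the quasi-steady-state
reduction: `f Z(n−1) + (n+1) Z(n+1) − (f+n) Z(n) = (f − n) ρ(n)` for all `n`,
with the term `f·Z(n−1)` omitted when `n = 0`. -/
theorem poisson_fredholm_correction_solution
    (f : ℝ) (hf : 0 < f)
    (ρ Z : ℕ → ℝ)
    (hρ : ∀ n, ρ n = f ^ n * Real.exp (-f) / (n.factorial : ℝ))
    (hZ : ∀ n, Z n = ((n : ℝ) - f) * ρ n) :
    ∀ n : ℕ,
      f * (if n = 0 then 0 else Z (n - 1)) + ((n : ℝ) + 1) * Z (n + 1)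
        - (f + (n : ℝ)) * Z n
      = (f - (n : ℝ)) * ρ n := by
  have key : ∀ n : ℕ, ((n : ℝ) + 1) * ρ (n + 1) = f * ρ n := by
    intro n
    rw [hρ, hρ, Nat.factorial_succ]
    have h1 : ((n.factorial : ℝ)) ≠ 0 := Nat.cast_ne_zero.mpr n.factorial_ne_zero
    have h2 : ((n : ℝ) + 1) ≠ 0 := by positivity
    push_cast
    field_simp
    ring
  intro n
  cases n with
  | zero =>
      simp only [if_pos rfl, hZ]
      have h0 := key 0
      push_cast at h0 ⊢
      linear_combination (1 - f) * h0
  | succ m =>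
      simp only [Nat.succ_ne_zero, if_neg, Nat.add_sub_cancel, hZ]
      have h1 := key m
      have h2 := key (m + 1)
      push_cast at h1 h2 ⊢
      linear_combination (f - (m : ℝ)) * h1 + ((m : ℝ) + 2 - f) * h2
end
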